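/- arXiv:1912.13365 — 5 statements merged into one kernel-verified Lean document; each statement's English description precedes it below -/
import Mathlib

section
/- For every real a > 0, ∫₁^∞ (e^{-a t} − e^{-a}) / (t² − 1)^{3/2} dt = e^{-a} − a·K₁(a), where K₁ is the modified Bessel function of the second kind of order 1. -/
open Real MeasureTheory Set Filter Topology

/-- The modified Bessel function of the second kind, via the standard
integral representation `K_ν(x) = ∫₀^∞ e^{-x cosh t} cosh(ν t) dt` (valid for `x > 0`). -/
noncomputable def besselK (ν x : ℝ) : ℝ :=
  ∫ t in Set.Ioi (0:ℝ), Real.exp (-x * Real.cosh t) * Real.cosh (ν * t)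

lemma cosh_image_Ioi : Real.cosh '' Set.Ioi 0 = Set.Ioi 1 := by
  ext t
  constructor
  · rintro ⟨u, hu, rfl⟩
    have h : |(0:ℝ)| < |u| := by
      rw [abs_of_pos (show (0:ℝ) < u from hu)]; simpa using hu
    have := Real.cosh_lt_cosh.2 h
    simpa [Real.cosh_zero] using this
  · intro ht
    have ht1 : (1:ℝ) < t := ht
    have hct : t < Real.cosh t := by
      have h2 : Real.exp t = Real.exp (t/2) * Real.exp (t/2) := by
        rw [← Real.exp_add]; ring_nf
      have h1 := Real.add_one_le_exp (t/2)
      have h3 := Real.exp_pos (-t)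
      rw [Real.cosh_eq]
      nlinarith [sq_nonneg (t/2 - 1)]
    have hsub := intermediate_value_Icc (le_of_lt (lt_trans one_pos ht1))
      (Real.continuous_cosh.continuousOn (s := Set.Icc 0 t))
    have htmem : t ∈ Set.Icc (Real.cosh 0) (Real.cosh t) := by
      rw [Real.cosh_zero]
      exact ⟨le_of_lt ht1, le_of_lt hct⟩
    obtain ⟨u, hu, hcu⟩ := hsub htmem
    refine ⟨u, ?_, hcu⟩
    rcases eq_or_lt_of_le hu.1 with h | h
    · exfalso; rw [← h, Real.cosh_zero] at hcu; exact absurd hcu.symm (ne_of_gt ht1)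
    · exact h

lemma besselK_one_eq (a : ℝ) :
    besselK 1 a = ∫ t in Set.Ioi (1:ℝ), Real.exp (-a * t) * (t / Real.sqrt (t^2 - 1)) := by
  have key := MeasureTheory.integral_image_eq_integral_abs_deriv_smul
    (s := Set.Ioi (0:ℝ)) (f := Real.cosh) (f' := Real.sinh) measurableSet_Ioi
    (fun x _ => (Real.hasDerivAt_cosh x).hasDerivWithinAt)
    (Real.cosh_strictMonoOn.injOn.mono (Set.Ioi_subset_Ici le_rfl))
    (fun t => Real.exp (-a * t) * (t / Real.sqrt (t^2 - 1)))
  rw [cosh_image_Ioi] at key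
  rw [key, besselK]
  apply MeasureTheory.setIntegral_congr_fun measurableSet_Ioi
  intro u hu
  have hsinh : 0 < Real.sinh u := Real.sinh_pos_iff.2 hu
  have hsq : Real.cosh u ^ 2 - 1 = Real.sinh u ^ 2 := by
    have := Real.cosh_sq_sub_sinh_sq u; linarith
  have hsqrt : Real.sqrt (Real.cosh u ^ 2 - 1) = Real.sinh u := by
    rw [hsq, Real.sqrt_sq hsinh.le]
  simp only [smul_eq_mul, abs_of_pos hsinh, hsqrt, one_mul]
  field_simp
lemma rpow_three_halves {x : ℝ} (hx : 0 < x) :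
    x ^ ((3:ℝ)/2) = x * Real.sqrt x := by
  rw [show (3:ℝ)/2 = 1 + 1/2 by norm_num, Real.rpow_add hx, Real.rpow_one,
    ← Real.sqrt_eq_rpow]

lemma hasDerivAt_H (a : ℝ) {t : ℝ} (ht : 1 < t) :
    HasDerivAt (fun t => (Real.exp (-a) - Real.exp (-a*t)) * (t / Real.sqrt (t^2-1)))
      (a * Real.exp (-a*t) * (t / Real.sqrt (t^2-1))
        + (Real.exp (-a*t) - Real.exp (-a)) / (t^2-1) ^ ((3:ℝ)/2)) t := by
  have hpos : 0 < t^2 - 1 := by nlinarith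
  have spos : 0 < Real.sqrt (t^2-1) := Real.sqrt_pos.2 hpos
  have hq : HasDerivAt (fun t : ℝ => t^2 - 1) (2*t) t := by
    simpa using (hasDerivAt_pow 2 t).sub_const 1
  have hs : HasDerivAt (fun t => Real.sqrt (t^2-1)) (2*t / (2 * Real.sqrt (t^2-1))) t :=
    hq.sqrt hpos.ne'
  have hv : HasDerivAt (fun t => t / Real.sqrt (t^2-1))
      ((1 * Real.sqrt (t^2-1) - t * (2*t / (2 * Real.sqrt (t^2-1)))) / Real.sqrt (t^2-1) ^ 2) t :=
    (hasDerivAt_id t).div hs spos.ne'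
  have hu : HasDerivAt (fun t => Real.exp (-a) - Real.exp (-a*t)) (a * Real.exp (-a*t)) t := by
    have h1 : HasDerivAt (fun y : ℝ => Real.exp (-a*y)) (Real.exp (-a*t) * (-a*1)) t :=
      ((hasDerivAt_id t).const_mul (-a)).exp
    simpa [mul_comm] using (hasDerivAt_const t (Real.exp (-a))).fun_sub h1
  have := hu.fun_mul hv
  refine this.congr_deriv (Eq.symm ?_)
  have hsq : Real.sqrt (t^2-1) ^ 2 = t^2 - 1 := Real.sq_sqrt hpos.le
  rw [rpow_three_halves hpos]
  set s := Real.sqrt (t^2-1) with hsdef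
  rw [← hsq]
  field_simp
  linear_combination (Real.exp (-(a*t)) - Real.exp (-a)) * hsq
lemma tendsto_H_atTop (a : ℝ) (ha : 0 < a) :
    Tendsto (fun t => (Real.exp (-a) - Real.exp (-a*t)) * (t / Real.sqrt (t^2-1)))
      atTop (𝓝 (Real.exp (-a))) := by
  have hexp : Tendsto (fun t : ℝ => Real.exp (-a*t)) atTop (𝓝 0) := by
    have h1 : Tendsto (fun t : ℝ => a * t) atTop atTop :=
      Tendsto.const_mul_atTop ha tendsto_id
    have h2 := Real.tendsto_exp_neg_atTop_nhds_zero.comp h1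
    apply h2.congr
    intro t
    simp [Function.comp, neg_mul]
  have hone : Tendsto (fun t : ℝ => t / Real.sqrt (t^2-1)) atTop (𝓝 1) := by
    have h0 : Tendsto (fun t : ℝ => (t^2-1)⁻¹) atTop (𝓝 0) := by
      apply Tendsto.inv_tendsto_atTop
      apply tendsto_atTop_add_const_right
      exact (tendsto_pow_atTop (by norm_num)).comp tendsto_id
    have h1 : Tendsto (fun t : ℝ => 1 + (t^2-1)⁻¹) atTop (𝓝 1) := by
      simpa using h0.const_add 1
    have h2 : Tendsto (fun t : ℝ => Real.sqrt (1 + (t^2-1)⁻¹)) atTop (𝓝 1) := by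
      have := (Real.continuous_sqrt.tendsto 1).comp h1
      simpa [Function.comp_def] using this
    apply h2.congr'
    filter_upwards [eventually_gt_atTop (1:ℝ)] with t ht
    have hpos : 0 < t^2 - 1 := by nlinarith
    have ht0 : 0 ≤ t := by linarith
    rw [show 1 + (t^2-1)⁻¹ = t^2 / (t^2-1) by field_simp; ring,
      Real.sqrt_div (sq_nonneg t), Real.sqrt_sq ht0]
  have := ((tendsto_const_nhds (x := Real.exp (-a))).sub hexp).mul hone
  simpa using this

lemma contWithin_H (a : ℝ) :
    ContinuousWithinAt
      (fun t => (Real.exp (-a) - Real.exp (-a*t)) * (t / Real.sqrt (t^2-1)))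
      (Set.Ici 1) 1 := by
  rw [← continuousWithinAt_Ioi_iff_Ici]
  unfold ContinuousWithinAt
  have hH1 : (Real.exp (-a) - Real.exp (-a*1)) * ((1:ℝ) / Real.sqrt (1^2-1)) = 0 := by
    norm_num
  have : (fun t => (Real.exp (-a) - Real.exp (-a*t)) * (t / Real.sqrt (t^2-1))) 1 = 0 := by
    simpa using hH1
  rw [this]
  have hA : Tendsto (fun t => (Real.exp (-a) - Real.exp (-a*t)) / (t - 1))
      (𝓝[>] 1) (𝓝 (a * Real.exp (-a))) := by
    have hd : HasDerivAt (fun t : ℝ => Real.exp (-a*t)) (Real.exp (-a*1) * (-a*1)) 1 :=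
      ((hasDerivAt_id 1).const_mul (-a)).exp
    have hslope := (hasDerivAt_iff_tendsto_slope.1 hd).neg
    have h2 : Tendsto (fun t => -slope (fun t : ℝ => Real.exp (-a*t)) 1 t)
        (𝓝[>] 1) (𝓝 (-(Real.exp (-a*1) * (-a*1)))) :=
      hslope.mono_left (nhdsWithin_mono 1 (fun x hx => ne_of_gt hx))
    have h3 : -(Real.exp (-a*1) * (-a*1)) = a * Real.exp (-a) := by ring_nf
    rw [h3] at h2
    apply h2.congr'
    filter_upwards [self_mem_nhdsWithin] with t (ht : 1 < t)
    rw [slope_def_field]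
    have : t - 1 ≠ 0 := by intro h; linarith [sub_eq_zero.1 h]
    field_simp
    ring
  have hB : Tendsto (fun t : ℝ => t * Real.sqrt (t-1) / Real.sqrt (t+1))
      (𝓝[>] 1) (𝓝 0) := by
    have hc : ContinuousAt (fun t : ℝ => t * Real.sqrt (t-1) / Real.sqrt (t+1)) 1 := by
      apply ContinuousAt.div
      · exact continuousAt_id.mul ((Real.continuous_sqrt.continuousAt).comp
          (continuousAt_id.sub continuousAt_const))
      · exact (Real.continuous_sqrt.continuousAt).comp
          (continuousAt_id.add continuousAt_const)
      · simp [Real.sqrt_eq_zero']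
    have hval : (1:ℝ) * Real.sqrt (1-1) / Real.sqrt (1+1) = 0 := by
      norm_num
    have := hc.tendsto.mono_left (nhdsWithin_le_nhds (s := Set.Ioi 1))
    simpa [hval] using this
  have hAB := hA.mul hB
  rw [mul_zero] at hAB
  apply hAB.congr'
  filter_upwards [self_mem_nhdsWithin] with t (ht : 1 < t)
  have h1 : (0:ℝ) < t - 1 := by linarith
  have h2 : (0:ℝ) < t + 1 := by linarith
  have hsqrt : Real.sqrt (t^2-1) = Real.sqrt (t-1) * Real.sqrt (t+1) := by
    rw [show t^2-1 = (t-1)*(t+1) by ring, Real.sqrt_mul h1.le]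
  have hs1 : Real.sqrt (t-1) ≠ 0 := (Real.sqrt_pos.2 h1).ne'
  have hs2 : Real.sqrt (t+1) ≠ 0 := (Real.sqrt_pos.2 h2).ne'
  have hsq1 : Real.sqrt (t-1) ^ 2 = t - 1 := Real.sq_sqrt h1.le
  rw [hsqrt]
  simp only [neg_mul]
  field_simp
  linear_combination (Real.exp (-a) - Real.exp (-(a*t))) * hsq1
lemma integrable_shift_rpow : IntegrableOn (fun t : ℝ => (t-1) ^ (-(1/2):ℝ)) (Set.Ioc 1 2) := by
  have h : IntervalIntegrable (fun x : ℝ => x ^ (-(1/2):ℝ)) volume 0 1 :=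
    intervalIntegral.intervalIntegrable_rpow' (by norm_num)
  have h2 := h.comp_sub_right 1
  rw [intervalIntegrable_iff_integrableOn_Ioc_of_le (by norm_num)] at h2
  norm_num at h2
  exact h2

lemma integrable_G (a : ℝ) (ha : 0 < a) :
    IntegrableOn (fun t => a * Real.exp (-a*t) * (t / Real.sqrt (t^2-1))) (Set.Ioi 1) := by
  have hcont : ContinuousOn (fun t => a * Real.exp (-a*t) * (t / Real.sqrt (t^2-1)))
      (Set.Ioi 1) := by
    apply ContinuousOn.mul
    · exact (Continuous.continuousOn (by continuity))
    · apply ContinuousOn.div continuousOn_id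
      · exact (Real.continuous_sqrt.comp (by continuity)).continuousOn
      · intro t ht
        have : (0:ℝ) < t^2 - 1 := by have : (1:ℝ) < t := ht; nlinarith
        exact (Real.sqrt_pos.2 this).ne'
  rw [show Set.Ioi (1:ℝ) = Set.Ioc 1 2 ∪ Set.Ioi 2 from (Set.Ioc_union_Ioi_eq_Ioi (by norm_num)).symm]
  apply MeasureTheory.IntegrableOn.union
  · -- on Ioc 1 2
    apply MeasureTheory.Integrable.mono' (g := fun t => (2*a) * (t-1) ^ (-(1/2):ℝ))
      (integrable_shift_rpow.const_mul (2*a))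
    · exact (hcont.mono (fun x hx => Set.Ioc_subset_Ioi_self hx)).aestronglyMeasurable
        measurableSet_Ioc
    · rw [ae_restrict_iff' measurableSet_Ioc]
      refine MeasureTheory.ae_of_all _ (fun t ht => ?_)
      obtain ⟨ht1, ht2⟩ := ht
      have h1 : (0:ℝ) < t - 1 := by linarith
      have hpos : (0:ℝ) < t^2 - 1 := by nlinarith
      have spos : 0 < Real.sqrt (t^2-1) := Real.sqrt_pos.2 hpos
      have hE : Real.exp (-a*t) ≤ 1 := by
        rw [Real.exp_le_one_iff]; nlinarith
      have hsqrt : Real.sqrt (t^2-1) = Real.sqrt (t-1) * Real.sqrt (t+1) := by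
        rw [show t^2-1 = (t-1)*(t+1) by ring, Real.sqrt_mul h1.le]
      have hge : Real.sqrt (t-1) ≤ Real.sqrt (t^2-1) := by
        rw [hsqrt]
        nlinarith [Real.sqrt_nonneg (t-1), Real.one_le_sqrt.2 (by linarith : (1:ℝ) ≤ t+1)]
      have hrw : (t-1) ^ (-(1/2):ℝ) = 1 / Real.sqrt (t-1) := by
        rw [Real.rpow_neg h1.le, Real.sqrt_eq_rpow, one_div]
        norm_num
      have hs1 : 0 < Real.sqrt (t-1) := Real.sqrt_pos.2 h1
      have hX : t / Real.sqrt (t^2-1) ≤ 2 / Real.sqrt (t-1) :=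
        div_le_div₀ (by norm_num) ht2 hs1 hge
      rw [Real.norm_eq_abs, abs_of_nonneg (by positivity), hrw]
      calc a * Real.exp (-a*t) * (t / Real.sqrt (t^2-1))
          ≤ a * 1 * (2 / Real.sqrt (t-1)) := by
            apply mul_le_mul (mul_le_mul_of_nonneg_left hE ha.le) hX (by positivity)
              (by positivity)
        _ = 2 * a * (1 / Real.sqrt (t-1)) := by ring
  · -- on Ioi 2
    apply MeasureTheory.Integrable.mono' (g := fun t => (2*a) * Real.exp (-a*t))
      ((exp_neg_integrableOn_Ioi 2 ha).const_mul (2*a))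
    · exact (hcont.mono (fun x (hx : x ∈ Set.Ioi 2) => lt_trans one_lt_two hx)).aestronglyMeasurable
        measurableSet_Ioi
    · rw [ae_restrict_iff' measurableSet_Ioi]
      refine MeasureTheory.ae_of_all _ (fun t (ht : 2 < t) => ?_)
      have hpos : (0:ℝ) < t^2 - 1 := by nlinarith
      have spos : 0 < Real.sqrt (t^2-1) := Real.sqrt_pos.2 hpos
      have hsq := Real.sq_sqrt hpos.le
      have htle : t ≤ 2 * Real.sqrt (t^2-1) := by
        nlinarith [Real.sqrt_nonneg (t^2-1)]
      have hdiv : t / Real.sqrt (t^2-1) ≤ 2 := by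
        rw [div_le_iff₀ spos]; linarith
      rw [Real.norm_eq_abs, abs_of_nonneg (by positivity)]
      calc a * Real.exp (-a*t) * (t / Real.sqrt (t^2-1))
          ≤ a * Real.exp (-a*t) * 2 := by
            apply mul_le_mul_of_nonneg_left hdiv (by positivity)
        _ = 2 * a * Real.exp (-a*t) := by ring

lemma integrable_F (a : ℝ) (ha : 0 < a) :
    IntegrableOn (fun t => (Real.exp (-a*t) - Real.exp (-a)) / (t^2-1) ^ ((3:ℝ)/2))
      (Set.Ioi 1) := by
  have hcont : ContinuousOn (fun t => (Real.exp (-a*t) - Real.exp (-a)) / (t^2-1) ^ ((3:ℝ)/2))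
      (Set.Ioi 1) := by
    apply ContinuousOn.div
    · exact Continuous.continuousOn (by continuity)
    · apply ContinuousOn.rpow_const (by fun_prop)
      intro t ht
      have : (1:ℝ) < t := ht
      left; nlinarith
    · intro t ht
      have : (1:ℝ) < t := ht
      exact (Real.rpow_pos_of_pos (by nlinarith) _).ne'
  rw [show Set.Ioi (1:ℝ) = Set.Ioc 1 2 ∪ Set.Ioi 2 from
    (Set.Ioc_union_Ioi_eq_Ioi (by norm_num)).symm]
  apply MeasureTheory.IntegrableOn.union
  · apply MeasureTheory.Integrable.mono' (g := fun t => a * (t-1) ^ (-(1/2):ℝ))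
      (integrable_shift_rpow.const_mul a)
    · exact (hcont.mono (fun x hx => Set.Ioc_subset_Ioi_self hx)).aestronglyMeasurable
        measurableSet_Ioc
    · rw [ae_restrict_iff' measurableSet_Ioc]
      refine MeasureTheory.ae_of_all _ (fun t ht => ?_)
      obtain ⟨ht1, ht2⟩ := ht
      have h1 : (0:ℝ) < t - 1 := by linarith
      have hpos : (0:ℝ) < t^2 - 1 := by nlinarith
      have hDpos : 0 < (t^2-1) ^ ((3:ℝ)/2) := Real.rpow_pos_of_pos hpos _
      -- numerator bound
      have hprod : Real.exp (-a) * Real.exp (-(a*(t-1))) = Real.exp (-a*t) := by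
        rw [← Real.exp_add]; ring_nf
      have hexp1 := Real.add_one_le_exp (-(a*(t-1)))
      have hE0 : Real.exp (-a) ≤ 1 := by rw [Real.exp_le_one_iff]; linarith
      have h2 : Real.exp (-a) * (1 - a*(t-1)) ≤ Real.exp (-a*t) := by
        rw [← hprod]
        apply mul_le_mul_of_nonneg_left (by linarith) (Real.exp_pos _).le
      have hnum : Real.exp (-a) - Real.exp (-a*t) ≤ a * (t-1) := by
        nlinarith [h2, mul_nonneg (mul_nonneg ha.le h1.le) (sub_nonneg.2 hE0)]
      have hnum0 : Real.exp (-a*t) ≤ Real.exp (-a) := by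
        apply Real.exp_le_exp.2; nlinarith
      -- denominator bound
      have hden : (t-1) ^ ((3:ℝ)/2) ≤ (t^2-1) ^ ((3:ℝ)/2) :=
        Real.rpow_le_rpow h1.le (by nlinarith) (by norm_num)
      have hdpos : 0 < (t-1) ^ ((3:ℝ)/2) := Real.rpow_pos_of_pos h1 _
      have hkey : a * (t-1) / (t-1) ^ ((3:ℝ)/2) = a * (t-1) ^ (-(1/2):ℝ) := by
        rw [mul_div_assoc]
        congr 1
        rw [show (-(1/2):ℝ) = 1 - 3/2 by norm_num, Real.rpow_sub h1, Real.rpow_one]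
      rw [Real.norm_eq_abs, abs_div, abs_of_nonpos (by linarith), abs_of_pos hDpos, ← hkey]
      apply div_le_div₀ (by positivity) (by linarith) hdpos hden
  · apply MeasureTheory.Integrable.mono' (g := fun t => 3 * t ^ (-3:ℝ))
      ((integrableOn_Ioi_rpow_of_lt (by norm_num) (by norm_num)).const_mul 3)
    · exact (hcont.mono (fun x (hx : x ∈ Set.Ioi 2) => lt_trans one_lt_two hx)).aestronglyMeasurable
        measurableSet_Ioi
    · rw [ae_restrict_iff' measurableSet_Ioi]
      refine MeasureTheory.ae_of_all _ (fun t (ht : 2 < t) => ?_)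
      have ht0 : (0:ℝ) < t := by linarith
      have hpos : (0:ℝ) < t^2 - 1 := by nlinarith
      have hDpos : 0 < (t^2-1) ^ ((3:ℝ)/2) := Real.rpow_pos_of_pos hpos _
      have hnum0 : Real.exp (-a*t) ≤ Real.exp (-a) := by
        apply Real.exp_le_exp.2; nlinarith
      have hE0 : Real.exp (-a) ≤ 1 := by rw [Real.exp_le_one_iff]; linarith
      -- denominator lower bound : t^3/3 ≤ (t^2-1)^{3/2}
      have h23 : ((2:ℝ) ^ ((3:ℝ)/2)) ≤ 3 := by
        have hsq : ((2:ℝ) ^ ((3:ℝ)/2)) ^ 2 = 8 := by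
          rw [← Real.rpow_natCast ((2:ℝ) ^ ((3:ℝ)/2)) 2, ← Real.rpow_mul (by norm_num)]
          norm_num
        nlinarith [Real.rpow_nonneg (by norm_num : (0:ℝ) ≤ 2) ((3:ℝ)/2)]
      have hhalf : t^2/2 ≤ t^2 - 1 := by nlinarith
      have hd1 : (t^2/2) ^ ((3:ℝ)/2) ≤ (t^2-1) ^ ((3:ℝ)/2) :=
        Real.rpow_le_rpow (by positivity) hhalf (by norm_num)
      have hd2 : (t^2/2) ^ ((3:ℝ)/2) = t ^ (3:ℝ) / 2 ^ ((3:ℝ)/2) := by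
        rw [Real.div_rpow (sq_nonneg t) (by norm_num)]
        congr 1
        rw [← Real.rpow_natCast t 2, ← Real.rpow_mul ht0.le]
        norm_num
      have hd3 : t ^ (3:ℝ) / 3 ≤ (t^2-1) ^ ((3:ℝ)/2) := by
        refine le_trans ?_ hd1
        rw [hd2]
        apply div_le_div_of_nonneg_left (by positivity) (by positivity) h23
      have htr : 0 < t ^ (3:ℝ) := Real.rpow_pos_of_pos ht0 _
      rw [Real.norm_eq_abs, abs_div, abs_of_nonpos (by linarith), abs_of_pos hDpos, neg_sub]
      have : Real.exp (-a) - Real.exp (-a*t) ≤ 1 := by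
        nlinarith [Real.exp_pos (-a*t)]
      calc (Real.exp (-a) - Real.exp (-a*t)) / (t^2-1) ^ ((3:ℝ)/2)
          ≤ 1 / (t ^ (3:ℝ) / 3) := div_le_div₀ (by norm_num) this (by positivity) hd3
        _ = 3 * t ^ (-3:ℝ) := by
            rw [Real.rpow_neg ht0.le]
            field_simp

theorem integral_sub_exp_div_rpow (a : ℝ) (ha : 0 < a) :
    ∫ t in Set.Ioi (1:ℝ), (Real.exp (-a * t) - Real.exp (-a)) / (t ^ 2 - 1) ^ ((3:ℝ)/2)
      = Real.exp (-a) - a * besselK 1 a := by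
  have hint : IntegrableOn
      (fun t => a * Real.exp (-a*t) * (t / Real.sqrt (t^2-1))
        + (Real.exp (-a*t) - Real.exp (-a)) / (t^2-1) ^ ((3:ℝ)/2)) (Set.Ioi 1) :=
    (integrable_G a ha).add (integrable_F a ha)
  have hFTC := MeasureTheory.integral_Ioi_of_hasDerivAt_of_tendsto
    (f := fun t => (Real.exp (-a) - Real.exp (-a*t)) * (t / Real.sqrt (t^2-1)))
    (f' := fun t => a * Real.exp (-a*t) * (t / Real.sqrt (t^2-1))
        + (Real.exp (-a*t) - Real.exp (-a)) / (t^2-1) ^ ((3:ℝ)/2))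
    (contWithin_H a) (fun t ht => hasDerivAt_H a ht) hint (tendsto_H_atTop a ha)
  have hH1 : (Real.exp (-a) - Real.exp (-a*1)) * ((1:ℝ) / Real.sqrt (1^2-1)) = 0 := by
    norm_num
  beta_reduce at hFTC
  rw [hH1, sub_zero] at hFTC
  rw [MeasureTheory.integral_add ((integrable_G a ha).mono_set le_rfl)
    ((integrable_F a ha).mono_set le_rfl)] at hFTC
  have hG : (∫ t in Set.Ioi (1:ℝ), a * Real.exp (-a*t) * (t / Real.sqrt (t^2-1)))
      = a * besselK 1 a := by
    rw [besselK_one_eq]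
    rw [← MeasureTheory.integral_const_mul]
    apply MeasureTheory.setIntegral_congr_fun measurableSet_Ioi
    intro t _
    ring
  rw [hG] at hFTC
  linarith [hFTC]
end

section
/- For every real x with |x| > 1, ∫_{-1}^{1} √(1 − b²)/(x − b)² db = π·(−1 + |x|/√(x² − 1)). -/
open Real Set intervalIntegral

lemma deriv_alg (x b r s : ℝ) (hr : 0 < r) (hr2 : r^2 = 1-b^2) (hs : 0 < s)
    (hs2 : s^2 = x^2-1) (hxb : 0 < x-b) (hx : 0 < x) :
    ((-b/r)*(x-b) - r*(-1))/(x-b)^2 - 1/r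
      + (2*x/s) * ((1/(1+((x*(b/(1+r)) - 1)/s)^2)) * ((x * ((1*(1+r) - b*(-b/r))/(1+r)^2))/s))
      = r/(x-b)^2 := by
  have h1r : (0:ℝ) < 1 + r := by linarith
  have hA : ((-b/r)*(x-b) - r*(-1)) = (1-b*x)/r := by
    field_simp; linear_combination hr2
  have ht' : (1*(1+r) - b*(-b/r)) = (1+r)/r := by
    field_simp; linear_combination hr2
  have hin : (x*(b/(1+r)) - 1) = (x*b-1-r)/(1+r) := by field_simp; ring
  have hu : 1+((x*(b/(1+r)) - 1)/s)^2 = 2*x*(x-b)/((1+r)*s^2) := by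
    rw [hin, div_div, div_pow]
    rw [add_div' _ _ _ (pow_ne_zero 2 (by positivity : ((1+r)*s:ℝ) ≠ 0)),
      div_eq_div_iff (by positivity) (by positivity)]
    linear_combination ((1+r)*s^2*(1+r)^2)*hs2 + ((1+r)*s^2*x^2)*hr2
  rw [hA, ht', hu]
  have harc : (2*x/s) * ((1/(2*x*(x-b)/((1+r)*s^2))) * ((x * ((1+r)/r/(1+r)^2))/s))
      = x/((x-b)*r) := by
    rw [one_div_div]
    field_simp
  rw [harc]
  rw [div_div]
  rw [div_sub_div _ _ (by positivity : (r*(x-b)^2 : ℝ) ≠ 0) (by positivity : (r:ℝ) ≠ 0),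
    div_add_div _ _ (by positivity : (r*(x-b)^2*r : ℝ) ≠ 0) (by positivity : ((x-b)*r : ℝ) ≠ 0),
    div_eq_div_iff (by positivity) (by positivity)]
  linear_combination (-(r^2*(x-b)^3))*hr2

lemma key_pos (x : ℝ) (hx : 1 < x) :
    ∫ b in (-1:ℝ)..1, Real.sqrt (1 - b ^ 2) / (x - b) ^ 2
      = Real.pi * (-1 + x / Real.sqrt (x ^ 2 - 1)) := by
  have hs : 0 < Real.sqrt (x^2-1) := Real.sqrt_pos.2 (by nlinarith)
  have hs2 : (Real.sqrt (x^2-1))^2 = x^2-1 := Real.sq_sqrt (by nlinarith)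
  set s := Real.sqrt (x^2-1) with hs_def
  set F : ℝ → ℝ := fun b => Real.sqrt (1-b^2)/(x-b) - Real.arcsin b
      + (2*x/s) * Real.arctan ((x*(b/(1+Real.sqrt (1-b^2))) - 1)/s) with hF_def
  have hderiv : ∀ b ∈ Ioo (-1:ℝ) 1, HasDerivAt F (Real.sqrt (1-b^2)/(x-b)^2) b := by
    intro b hb
    obtain ⟨hb1, hb2⟩ := hb
    have h1b : (0:ℝ) < 1 - b^2 := by nlinarith
    have hr : 0 < Real.sqrt (1-b^2) := Real.sqrt_pos.2 h1b
    have hr2 : (Real.sqrt (1-b^2))^2 = 1 - b^2 := Real.sq_sqrt h1b.le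
    set r := Real.sqrt (1-b^2) with hr_def
    have hxb : 0 < x - b := by linarith
    have h1r : (0:ℝ) < 1 + r := by linarith
    have hdr : HasDerivAt (fun b : ℝ => Real.sqrt (1 - b^2)) (-b/r) b := by
      have := (Real.hasDerivAt_sqrt (x := 1 - b^2) (by positivity)).comp b
        ((hasDerivAt_id b).pow 2 |>.const_sub 1)
      refine this.congr_deriv (Eq.symm ?_)
      field_simp [hr_def]
      rw [← hr_def, id_eq]; ring
    have hd1 : HasDerivAt (fun b => Real.sqrt (1-b^2)/(x-b))
        (((-b/r)*(x-b) - r*(-1))/(x-b)^2) b :=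
      hdr.div ((hasDerivAt_id b).const_sub x) (by positivity)
    have hd2 : HasDerivAt Real.arcsin (1/r) b :=
      Real.hasDerivAt_arcsin (by linarith) (by linarith)
    have hdt : HasDerivAt (fun b => b/(1+Real.sqrt (1-b^2)))
        ((1*(1+r) - b*(-b/r))/(1+r)^2) b :=
      (hasDerivAt_id b).div (hdr.const_add 1) (by positivity)
    have hdu : HasDerivAt (fun b => (x*(b/(1+Real.sqrt (1-b^2))) - 1)/s)
        ((x * ((1*(1+r) - b*(-b/r))/(1+r)^2))/s) b :=
      ((hdt.const_mul x).sub_const 1).div_const s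
    have hdat : HasDerivAt (fun b => Real.arctan ((x*(b/(1+Real.sqrt (1-b^2))) - 1)/s))
        ((1/(1+((x*(b/(1+r)) - 1)/s)^2)) * ((x * ((1*(1+r) - b*(-b/r))/(1+r)^2))/s)) b :=
      (Real.hasDerivAt_arctan _).comp b hdu
    have hD := (hd1.sub hd2).add (hdat.const_mul (2*x/s))
    refine hD.congr_deriv (Eq.symm ?_)
    linear_combination -(deriv_alg x b r s hr hr2 hs hs2 hxb (by linarith))
  have c1 : ContinuousOn (fun b : ℝ => Real.sqrt (1-b^2)) (Icc (-1:ℝ) 1) :=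
    (Real.continuous_sqrt.comp (by continuity)).continuousOn
  have hxbne : ∀ b ∈ Icc (-1:ℝ) 1, x - b ≠ 0 := fun b hb => by
    have := hb.2; intro h; nlinarith [hb.2]
  have hcont : ContinuousOn F (Icc (-1:ℝ) 1) := by
    apply ContinuousOn.add
    · apply ContinuousOn.sub
      · exact c1.div ((continuous_const.sub continuous_id).continuousOn) hxbne
      · exact Real.continuous_arcsin.continuousOn
    · apply ContinuousOn.mul continuousOn_const
      apply Real.continuous_arctan.comp_continuousOn
      apply ContinuousOn.div _ continuousOn_const (fun b _ => ne_of_gt hs)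
      apply ContinuousOn.sub _ continuousOn_const
      apply ContinuousOn.mul continuousOn_const
      apply ContinuousOn.div continuousOn_id (continuousOn_const.add c1)
      intro b hb
      have : 0 ≤ Real.sqrt (1-b^2) := Real.sqrt_nonneg _
      show (1:ℝ) + Real.sqrt (1-b^2) ≠ 0
      positivity
  have hint : IntervalIntegrable (fun b => Real.sqrt (1-b^2)/(x-b)^2) MeasureTheory.volume (-1) 1 := by
    apply ContinuousOn.intervalIntegrable
    rw [uIcc_of_le (by norm_num)]
    apply c1.div (((continuous_const.sub continuous_id).pow 2).continuousOn)
    intro b hb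
    exact pow_ne_zero 2 (hxbne b hb)
  rw [show (∫ b in (-1:ℝ)..1, Real.sqrt (1 - b ^ 2) / (x - b) ^ 2)
      = ∫ b in (-1:ℝ)..1, Real.sqrt (1 - b ^ 2) / (x - b) ^ 2 from rfl]
  rw [integral_eq_sub_of_hasDeriv_right_of_le (by norm_num) hcont
    (fun b hb => (hderiv b hb).hasDerivWithinAt) hint]
  have e1 : Real.sqrt (1-(1:ℝ)^2) = 0 := by norm_num
  have e2 : Real.sqrt (1-(-1:ℝ)^2) = 0 := by norm_num
  have hsum : Real.arctan ((x-1)/s) + Real.arctan ((x+1)/s) = Real.pi/2 := by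
    have h1 : (0:ℝ) < (x-1)/s := by
      apply div_pos (by linarith) hs
    have hinv : ((x-1)/s)⁻¹ = (x+1)/s := by
      rw [inv_div, div_eq_div_iff (by linarith) (by positivity)]
      linear_combination hs2
    have := Real.arctan_inv_of_pos h1
    rw [hinv] at this
    rw [this]; ring
  rw [hF_def]
  simp only [e1, e2, Real.arcsin_one, Real.arcsin_neg_one]
  have harg1 : (x*((1:ℝ)/(1+(0:ℝ))) - 1)/s = (x-1)/s := by norm_num
  have harg2 : (x*((-1:ℝ)/(1+(0:ℝ))) - 1)/s = -((x+1)/s) := by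
    rw [show x*((-1:ℝ)/(1+(0:ℝ))) - 1 = -(x+1) by ring, neg_div]
  rw [harg1, harg2, Real.arctan_neg]
  field_simp
  linear_combination (4*x)*hsum

theorem semicircle_integral (x : ℝ) (hx : 1 < |x|) :
    ∫ b in (-1:ℝ)..1, Real.sqrt (1 - b ^ 2) / (x - b) ^ 2
      = Real.pi * (-1 + |x| / Real.sqrt (x ^ 2 - 1)) := by
  rcases lt_or_ge 1 x with h | h
  · rw [key_pos x h, abs_of_pos (by linarith)]
  · have hneg : x < -1 := by
      rcases abs_cases x with ⟨h1, _⟩ | ⟨h1, _⟩ <;> rw [h1] at hx <;> linarith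
    have h2 : 1 < -x := by linarith
    have hrw : (∫ b in (-1:ℝ)..1, Real.sqrt (1-b^2)/(x-b)^2)
        = ∫ b in (-1:ℝ)..1, Real.sqrt (1-b^2)/((-x)-b)^2 := by
      have h := intervalIntegral.integral_comp_neg (a := (-1:ℝ)) (b := 1)
        (fun c => Real.sqrt (1-c^2)/((-x)-c)^2)
      norm_num at h
      rw [← h]
      apply intervalIntegral.integral_congr
      intro b _
      show Real.sqrt (1-b^2)/(x-b)^2 = Real.sqrt (1-b^2)/(-x+b)^2
      rw [show (-x + b)^2 = (x-b)^2 from by ring]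
    rw [show (∫ b in (-1:ℝ)..1, Real.sqrt (1 - b ^ 2) / (x - b) ^ 2)
        = ∫ b in (-1:ℝ)..1, Real.sqrt (1-b^2)/(x-b)^2 from rfl, hrw, key_pos (-x) h2,
      abs_of_neg (by linarith)]
    norm_num
end

section
/- Let r > 1 be real, τ₂ > 0, and E(r, τ₁ + iτ₂) = Σ_{(m,n)≠(0,0)} τ₂^r/|m(τ₁+iτ₂)+n|^{2r}. Then the zeroth Fourier coefficient in τ₁ is ∫_{−1/2}^{1/2} E(r, τ₁ + iτ₂) dτ₁ = 2ζ(2r)·τ₂^r + 2√π·(Γ(r − 1/2)/Γ(r))·ζ(2r−1)·τ₂^{1−r}. -/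
open MeasureTheory Set
open scoped ENNReal

/-- The Riemann zeta function for real argument `s > 1`, as `Σ_{n ≥ 1} n^{-s}`. -/
noncomputable def rzeta (s : ℝ) : ℝ := ∑' n : ℕ, 1 / (n + 1 : ℝ) ^ s

/-- The non-holomorphic Eisenstein series as a function of `τ₁, τ₂`. -/
noncomputable def E2 (r τ₁ τ₂ : ℝ) : ℝ :=
  ∑' p : ℤ × ℤ, if p = 0 then 0 else
    τ₂ ^ r / ‖(p.1 : ℂ) * (τ₁ + τ₂ * Complex.I) + (p.2 : ℂ)‖ ^ (2 * r)

namespace EisensteinFourierAux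

lemma tsum_toReal {ι : Type*} [Countable ι] {f : ι → ℝ} (hf : ∀ i, 0 ≤ f i) :
    ∑' i, f i = (∑' i, ENNReal.ofReal (f i)).toReal := by
  by_cases h : Summable f
  · rw [← ENNReal.ofReal_tsum_of_nonneg hf h, ENNReal.toReal_ofReal (tsum_nonneg hf)]
  · rw [tsum_eq_zero_of_not_summable h]
    have htop : ∑' i, ENNReal.ofReal (f i) = ⊤ := by
      by_contra htop
      exact h <| (ENNReal.summable_toReal htop).congr fun i => ENNReal.toReal_ofReal (hf i)
    simp [htop]

lemma int_tsum_symm {h : ℤ → ℝ≥0∞} (h0 : h 0 = 0) (hsymm : ∀ n : ℤ, h (-n) = h n) :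
    ∑' n : ℤ, h n = 2 * ∑' k : ℕ, h ((k : ℤ) + 1) := by
  have hf : HasSum (fun k : ℕ => h (k : ℤ)) (∑' k : ℕ, h (k : ℤ)) := ENNReal.summable.hasSum
  have hg : HasSum (fun k : ℕ => h (Int.negSucc k)) (∑' k : ℕ, h (Int.negSucc k)) :=
    ENNReal.summable.hasSum
  have hS := hf.int_rec hg
  have heq : (fun n : ℤ => Int.rec (motive := fun _ => ℝ≥0∞)
      (fun k : ℕ => h (k : ℤ)) (fun k : ℕ => h (Int.negSucc k)) n) = h := by
    funext n; cases n <;> rfl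
  rw [heq] at hS
  rw [hS.tsum_eq]
  have h1 : ∑' k : ℕ, h (k : ℤ) = ∑' k : ℕ, h ((k : ℤ) + 1) := by
    rw [tsum_eq_zero_add' ENNReal.summable]
    simp only [Nat.cast_zero, h0, zero_add]
    apply tsum_congr
    intro k
    norm_cast
  have h2 : ∀ k : ℕ, h (Int.negSucc k) = h ((k : ℤ) + 1) := fun k => by
    rw [Int.negSucc_eq, ← hsymm ((k : ℤ) + 1)]
  simp only [h2] at *
  rw [h1, two_mul]
lemma lintegral_affine {f : ℝ → ℝ≥0∞} (hf : Measurable f) {a : ℝ} (ha : a ≠ 0) (b : ℝ) :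
    ∫⁻ x : ℝ, f (a * x + b) = ENNReal.ofReal |a|⁻¹ * ∫⁻ x, f x := by
  have hg : Measurable fun y : ℝ => f (y + b) := hf.comp (measurable_add_const b)
  calc ∫⁻ x : ℝ, f (a * x + b) = ∫⁻ x : ℝ, (fun y => f (y + b)) (a * x) := rfl
    _ = ∫⁻ y : ℝ, f (y + b) ∂(Measure.map (fun x : ℝ => a * x) volume) :=
        (lintegral_map hg (measurable_const_mul a)).symm
    _ = ENNReal.ofReal |a|⁻¹ * ∫⁻ y : ℝ, f (y + b) := by
        rw [Real.map_volume_mul_left ha, lintegral_smul_measure, abs_inv, smul_eq_mul]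
    _ = ENNReal.ofReal |a|⁻¹ * ∫⁻ x, f x := by
        rw [lintegral_add_right_eq_self (fun y => f y) b]

lemma sum_unit_intervals (f : ℝ → ℝ≥0∞) (c : ℝ) :
    ∑' n : ℤ, ∫⁻ x in Ioc (c + n) (c + n + 1), f x = ∫⁻ x, f x := by
  rw [← lintegral_iUnion (fun _ => measurableSet_Ioc)
    (Set.pairwise_disjoint_Ioc_add_intCast c) f, iUnion_Ioc_add_intCast,
    Measure.restrict_univ]

lemma split_interval (f : ℝ → ℝ≥0∞) (c : ℝ) (a : ℕ) :
    ∫⁻ x in Ioc c (c + a), f x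
      = ∑ j ∈ Finset.range a, ∫⁻ x in Ioc (c + j) (c + j + 1), f x := by
  induction a with
  | zero => simp
  | succ a ih =>
    have hsplit : Ioc c (c + ((a : ℕ) + 1 : ℕ)) = Ioc c (c + a) ∪ Ioc (c + a) (c + a + 1) := by
      rw [Set.Ioc_union_Ioc_eq_Ioc (le_add_of_nonneg_right (by positivity))
        (by linarith [Nat.cast_nonneg (α := ℝ) a])]
      push_cast; ring_nf
    rw [hsplit, lintegral_union measurableSet_Ioc (Set.Ioc_disjoint_Ioc_of_le le_rfl),
      Finset.sum_range_succ, ih]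

lemma periodize {f : ℝ → ℝ≥0∞} (hf : Measurable f) {m : ℤ} (hm : m ≠ 0) :
    ∑' n : ℤ, ∫⁻ τ in Ioc (-(1:ℝ)/2) (1/2), f ((m : ℝ) * τ + n) = ∫⁻ x, f x := by
  have hmR : (m : ℝ) ≠ 0 := Int.cast_ne_zero.mpr hm
  set a : ℕ := m.natAbs with ha_def
  have ha : 0 < a := Int.natAbs_pos.mpr hm
  have haR : (0:ℝ) < a := by exact_mod_cast ha
  have habs : |(m : ℝ)| = (a : ℝ) := by
    rw [← Int.cast_abs, Int.abs_eq_natAbs, Int.cast_natCast]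
  have step1 : ∀ n : ℤ, ∫⁻ τ in Ioc (-(1:ℝ)/2) (1/2), f ((m : ℝ) * τ + n)
      = ENNReal.ofReal (a:ℝ)⁻¹ * ∫⁻ x in Ioc ((n:ℝ) - a/2) (((n:ℝ) - a/2) + a), f x := by
    intro n
    set s : Set ℝ := Ioc (-(1:ℝ)/2) (1/2) with hs_def
    set J : Set ℝ := {x : ℝ | (x - n)/(m:ℝ) ∈ s} with hJ_def
    have hJmeas : MeasurableSet J :=
      ((measurable_id.sub_const ((n:ℤ):ℝ)).div_const (m:ℝ)) measurableSet_Ioc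
    have hkey : ∀ τ : ℝ, (((m:ℝ) * τ + n) - n)/(m:ℝ) = τ := fun τ => by field_simp; ring
    have hind : ∀ τ : ℝ, s.indicator (fun τ => f ((m:ℝ) * τ + n)) τ
        = J.indicator f ((m:ℝ) * τ + n) := by
      intro τ
      have hmem : ((m:ℝ) * τ + n) ∈ J ↔ τ ∈ s := by
        simp only [hJ_def, mem_setOf_eq, hkey]
      by_cases hτ : τ ∈ s
      · rw [indicator_of_mem hτ, indicator_of_mem (hmem.mpr hτ)]
      · rw [indicator_of_notMem hτ, indicator_of_notMem (fun hc => hτ (hmem.mp hc))]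
    have hJint : ∫⁻ x in J, f x = ∫⁻ x in Ioc ((n:ℝ) - a/2) (((n:ℝ) - a/2) + a), f x := by
      rcases hm.lt_or_gt with hneg | hpos
      · have hmR' : (m:ℝ) < 0 := by exact_mod_cast hneg
        have hma : (m:ℝ) = -(a:ℝ) := by rw [← habs, abs_of_neg hmR']; ring
        have hJ : J = Ico ((n:ℝ) - a/2) (((n:ℝ) - a/2) + a) := by
          ext x
          simp only [hJ_def, hs_def, mem_setOf_eq, mem_Ioc, mem_Ico,
            lt_div_iff_of_neg hmR', div_le_iff_of_neg hmR']
          rw [hma]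
          constructor <;> intro h <;> exact ⟨by linarith [h.1, h.2], by linarith [h.1, h.2]⟩
        rw [hJ]
        exact setLIntegral_congr Ico_ae_eq_Ioc
      · have hmR' : (0:ℝ) < m := by exact_mod_cast hpos
        have hma : (m:ℝ) = (a:ℝ) := by rw [← habs, abs_of_pos hmR']
        have hJ : J = Ioc ((n:ℝ) - a/2) (((n:ℝ) - a/2) + a) := by
          ext x
          simp only [hJ_def, hs_def, mem_setOf_eq, mem_Ioc,
            lt_div_iff₀ hmR', div_le_iff₀ hmR']
          rw [hma]
          constructor <;> intro h <;> exact ⟨by linarith [h.1, h.2], by linarith [h.1, h.2]⟩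
        rw [hJ]
    calc ∫⁻ τ in s, f ((m:ℝ) * τ + n)
        = ∫⁻ τ, s.indicator (fun τ => f ((m:ℝ) * τ + n)) τ :=
          (lintegral_indicator measurableSet_Ioc _).symm
      _ = ∫⁻ τ, J.indicator f ((m:ℝ) * τ + n) := lintegral_congr hind
      _ = ENNReal.ofReal |(m:ℝ)|⁻¹ * ∫⁻ x, J.indicator f x :=
          lintegral_affine (hf.indicator hJmeas) hmR n
      _ = ENNReal.ofReal (a:ℝ)⁻¹ * ∫⁻ x in J, f x := by
          rw [habs, lintegral_indicator hJmeas]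
      _ = ENNReal.ofReal (a:ℝ)⁻¹ * ∫⁻ x in Ioc ((n:ℝ) - a/2) (((n:ℝ) - a/2) + a), f x := by
          rw [hJint]
  calc ∑' n : ℤ, ∫⁻ τ in Ioc (-(1:ℝ)/2) (1/2), f ((m:ℝ) * τ + n)
      = ∑' n : ℤ, ENNReal.ofReal (a:ℝ)⁻¹
          * ∫⁻ x in Ioc ((n:ℝ) - a/2) (((n:ℝ) - a/2) + a), f x := tsum_congr step1
    _ = ENNReal.ofReal (a:ℝ)⁻¹
          * ∑' n : ℤ, ∫⁻ x in Ioc ((n:ℝ) - a/2) (((n:ℝ) - a/2) + a), f x :=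
        ENNReal.tsum_mul_left
    _ = ENNReal.ofReal (a:ℝ)⁻¹ * ∑' n : ℤ, ∑ j ∈ Finset.range a,
          ∫⁻ x in Ioc (((n:ℝ) - a/2) + j) ((((n:ℝ) - a/2) + j) + 1), f x := by
        congr 1; exact tsum_congr fun n => split_interval f _ a
    _ = ENNReal.ofReal (a:ℝ)⁻¹ * ∑ j ∈ Finset.range a, ∑' n : ℤ,
          ∫⁻ x in Ioc ((-(a:ℝ)/2 + j) + n) (((-(a:ℝ)/2 + j) + n) + 1), f x := by
        rw [Summable.tsum_finsetSum (fun _ _ => ENNReal.summable)]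
        congr 1
        refine Finset.sum_congr rfl fun j _ => tsum_congr fun n => ?_
        rw [show ((n:ℝ) - a/2) + j = (-(a:ℝ)/2 + j) + n by ring]
    _ = ENNReal.ofReal (a:ℝ)⁻¹ * ∑ j ∈ Finset.range a, ∫⁻ x, f x := by
        congr 1
        exact Finset.sum_congr rfl fun j _ => sum_unit_intervals f _
    _ = ENNReal.ofReal (a:ℝ)⁻¹ * ((a : ℝ≥0∞) * ∫⁻ x, f x) := by
        rw [Finset.sum_const, Finset.card_range, nsmul_eq_mul]
    _ = ∫⁻ x, f x := by
        rw [← mul_assoc, ← ENNReal.ofReal_natCast a, ← ENNReal.ofReal_mul (by positivity),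
          inv_mul_cancel₀ (by positivity), ENNReal.ofReal_one, one_mul]

lemma beta_lintegral {r : ℝ} (hr2 : 1/2 < r) :
    ∫⁻ x : ℝ, ENNReal.ofReal (((x^2 + 1) ^ r)⁻¹)
      = ENNReal.ofReal (Real.sqrt Real.pi * Real.Gamma (r - 1/2) / Real.Gamma r) := by
  have hr0 : (0:ℝ) < r := by linarith
  have hΓ : 0 < Real.Gamma r := Real.Gamma_pos_of_pos hr0
  have mB : Measurable fun x : ℝ => ENNReal.ofReal (((x^2 + 1) ^ r)⁻¹) :=
    (((measurable_id.pow_const 2).add_const 1).pow_const r).inv.ennreal_ofReal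
  set u : ℝ → ℝ → ℝ≥0∞ :=
    fun x t => ENNReal.ofReal (t ^ (r-1) * Real.exp (-t) * Real.exp (-(t * x^2))) with hu_def
  have humeas : Measurable (Function.uncurry u) := by
    apply Measurable.ennreal_ofReal
    exact ((measurable_snd.pow_const (r-1)).mul (measurable_snd.neg.exp)).mul
      ((measurable_snd.mul (measurable_fst.pow_const 2)).neg.exp)
  have step1 : ∀ x : ℝ, ENNReal.ofReal (Real.Gamma r) * ENNReal.ofReal (((x^2+1)^r)⁻¹)
      = ∫⁻ t in Ioi (0:ℝ), u x t := by
    intro x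
    have hb : (0:ℝ) < x^2 + 1 := by positivity
    have hint : IntegrableOn (fun t : ℝ => t ^ (r-1) * Real.exp (-((x^2+1) * t))) (Ioi 0) := by
      refine (integrableOn_rpow_mul_exp_neg_mul_rpow (p := 1) (s := r-1) (b := x^2+1)
        (by linarith) one_pos hb).congr_fun (fun t ht => ?_) measurableSet_Ioi
      simp only [Real.rpow_one, neg_mul]
    have h1 : ENNReal.ofReal (∫ t in Ioi (0:ℝ), t ^ (r-1) * Real.exp (-((x^2+1) * t)))
        = ∫⁻ t in Ioi (0:ℝ), ENNReal.ofReal (t ^ (r-1) * Real.exp (-((x^2+1) * t))) := by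
      refine ofReal_integral_eq_lintegral_ofReal hint ?_
      filter_upwards [self_mem_ae_restrict measurableSet_Ioi] with t ht
      have : (0:ℝ) ≤ t ^ (r-1) := Real.rpow_nonneg (le_of_lt ht) _
      positivity
    rw [Real.integral_rpow_mul_exp_neg_mul_Ioi hr0 hb] at h1
    have h2 : ∫⁻ t in Ioi (0:ℝ), ENNReal.ofReal (t ^ (r-1) * Real.exp (-((x^2+1) * t)))
        = ∫⁻ t in Ioi (0:ℝ), u x t := by
      refine lintegral_congr fun t => ?_
      rw [hu_def]
      congr 1
      rw [mul_assoc, ← Real.exp_add]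
      ring_nf
    rw [← h2, ← h1, ← ENNReal.ofReal_mul (by positivity)]
    congr 1
    rw [one_div, Real.inv_rpow hb.le]
    ring
  have step2 : ENNReal.ofReal (Real.Gamma r) * ∫⁻ x : ℝ, ENNReal.ofReal (((x^2 + 1) ^ r)⁻¹)
      = ENNReal.ofReal (Real.sqrt Real.pi * Real.Gamma (r - 1/2)) := by
    calc ENNReal.ofReal (Real.Gamma r) * ∫⁻ x : ℝ, ENNReal.ofReal (((x^2 + 1) ^ r)⁻¹)
        = ∫⁻ x : ℝ, ENNReal.ofReal (Real.Gamma r) * ENNReal.ofReal (((x^2+1)^r)⁻¹) :=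
          (lintegral_const_mul _ mB).symm
      _ = ∫⁻ x : ℝ, ∫⁻ t in Ioi (0:ℝ), u x t := lintegral_congr step1
      _ = ∫⁻ t in Ioi (0:ℝ), ∫⁻ x : ℝ, u x t :=
          lintegral_lintegral_swap humeas.aemeasurable
      _ = ∫⁻ t in Ioi (0:ℝ), ENNReal.ofReal
            (Real.sqrt Real.pi * (t ^ ((r - 1/2) - 1) * Real.exp (-(1 * t)))) := by
          refine setLIntegral_congr_fun measurableSet_Ioi ?_
          refine fun t ht => ?_
          have ht' : (0:ℝ) < t := ht
          have hnn : (0:ℝ) ≤ t ^ (r-1) * Real.exp (-t) := by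
            have : (0:ℝ) ≤ t ^ (r-1) := Real.rpow_nonneg ht'.le _
            positivity
          have hrw : ∀ x : ℝ, u x t
              = ENNReal.ofReal (t ^ (r-1) * Real.exp (-t)) * ENNReal.ofReal (Real.exp (-(t * x^2))) := by
            intro x
            simp only [hu_def]
            rw [ENNReal.ofReal_mul hnn]
          simp_rw [hrw]
          rw [lintegral_const_mul (ENNReal.ofReal (t ^ (r-1) * Real.exp (-t)))
            (f := fun x : ℝ => ENNReal.ofReal (Real.exp (-(t * x^2))))
            (((measurable_const.mul (measurable_id'.pow_const 2)).neg.exp).ennreal_ofReal)]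
          have hgauss : ∫⁻ x : ℝ, ENNReal.ofReal (Real.exp (-(t * x^2)))
              = ENNReal.ofReal (Real.sqrt (Real.pi / t)) := by
            rw [← ofReal_integral_eq_lintegral_ofReal]
            · congr 1
              simpa [neg_mul] using integral_gaussian t
            · simpa [neg_mul] using integrable_exp_neg_mul_sq ht'
            · exact ae_of_all _ fun x => (Real.exp_pos _).le
          rw [hgauss, ← ENNReal.ofReal_mul hnn]
          congr 1
          have h1 : Real.sqrt (Real.pi / t) = Real.sqrt Real.pi / Real.sqrt t :=
            Real.sqrt_div Real.pi_pos.le t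
          have h2 : Real.sqrt t = t ^ (1/2 : ℝ) := Real.sqrt_eq_rpow t
          have h3 : t ^ ((r - 1/2) - 1) = t ^ (r - 1) / t ^ (1/2 : ℝ) := by
            rw [← Real.rpow_sub ht']; congr 1; ring
          rw [one_mul, h1, h2, h3]
          ring
      _ = ENNReal.ofReal (Real.sqrt Real.pi * Real.Gamma (r - 1/2)) := by
          have hint2 : IntegrableOn
              (fun t : ℝ => Real.sqrt Real.pi * (t ^ ((r - 1/2) - 1) * Real.exp (-(1 * t))))
              (Ioi 0) := by
            have h := integrableOn_rpow_mul_exp_neg_mul_rpow (p := 1) (s := (r - 1/2) - 1)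
              (b := 1) (by linarith) one_pos one_pos
            have h' : IntegrableOn (fun t : ℝ => t ^ ((r - 1/2) - 1) * Real.exp (-(1 * t)))
                (Ioi 0) := by simpa [Real.rpow_one] using h
            exact h'.const_mul _
          rw [← ofReal_integral_eq_lintegral_ofReal hint2 ?_]
          · congr 1
            rw [MeasureTheory.integral_const_mul,
              Real.integral_rpow_mul_exp_neg_mul_Ioi (by linarith : (0:ℝ) < r - 1/2) one_pos]
            simp [Real.one_rpow]
          · filter_upwards [self_mem_ae_restrict measurableSet_Ioi] with t ht
            have : (0:ℝ) ≤ t ^ ((r - 1/2) - 1) := Real.rpow_nonneg (le_of_lt ht) _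
            positivity
  have hfin := (ENNReal.eq_div_iff ((ENNReal.ofReal_pos.mpr hΓ).ne') ENNReal.ofReal_ne_top).mpr step2
  rw [hfin, ← ENNReal.ofReal_div_of_pos hΓ]

lemma beta_scaled {r : ℝ} (hr2 : 1/2 < r) {c : ℝ} (hc : 0 < c) :
    ∫⁻ x : ℝ, ENNReal.ofReal (((x^2 + c^2) ^ r)⁻¹)
      = ENNReal.ofReal (c ^ (1 - 2*r)
          * (Real.sqrt Real.pi * Real.Gamma (r - 1/2) / Real.Gamma r)) := by
  have mg : Measurable fun x : ℝ => ENNReal.ofReal (((x^2 + c^2) ^ r)⁻¹) :=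
    (((measurable_id'.pow_const 2).add_const (c^2)).pow_const r).inv.ennreal_ofReal
  have haff := lintegral_affine mg hc.ne' 0
  have hpt : ∀ x : ℝ, (((c*x+0)^2 + c^2) ^ r)⁻¹ = c ^ (-(2*r)) * ((x^2+1)^r)⁻¹ := by
    intro x
    have h1 : (c*x+0)^2 + c^2 = c^2 * (x^2+1) := by ring
    rw [h1, Real.mul_rpow (by positivity) (by positivity), mul_inv]
    congr 1
    rw [← Real.rpow_natCast c 2, ← Real.rpow_mul hc.le, ← Real.rpow_neg hc.le]
    norm_num
  have hlhs : ∫⁻ x : ℝ, ENNReal.ofReal ((((c*x+0)^2 + c^2) ^ r)⁻¹)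
      = ENNReal.ofReal (c ^ (-(2*r)))
        * ENNReal.ofReal (Real.sqrt Real.pi * Real.Gamma (r - 1/2) / Real.Gamma r) := by
    calc ∫⁻ x : ℝ, ENNReal.ofReal ((((c*x+0)^2 + c^2) ^ r)⁻¹)
        = ∫⁻ x : ℝ, ENNReal.ofReal (c ^ (-(2*r))) * ENNReal.ofReal (((x^2+1)^r)⁻¹) := by
          refine lintegral_congr fun x => ?_
          rw [hpt x, ENNReal.ofReal_mul (by positivity)]
      _ = ENNReal.ofReal (c ^ (-(2*r))) * ∫⁻ x : ℝ, ENNReal.ofReal (((x^2+1)^r)⁻¹) :=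
          lintegral_const_mul _ ((((measurable_id'.pow_const 2).add_const 1).pow_const r).inv.ennreal_ofReal)
      _ = _ := by rw [beta_lintegral hr2]
  have habs : |c| = c := abs_of_pos hc
  rw [habs] at haff
  have hmain : ENNReal.ofReal c⁻¹ * ∫⁻ x : ℝ, ENNReal.ofReal (((x^2 + c^2) ^ r)⁻¹)
      = ENNReal.ofReal (c ^ (-(2*r)))
        * ENNReal.ofReal (Real.sqrt Real.pi * Real.Gamma (r - 1/2) / Real.Gamma r) := by
    rw [← haff]; exact hlhs
  have hcancel : ENNReal.ofReal c * ENNReal.ofReal c⁻¹ = 1 := by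
    rw [← ENNReal.ofReal_mul hc.le, mul_inv_cancel₀ hc.ne', ENNReal.ofReal_one]
  calc ∫⁻ x : ℝ, ENNReal.ofReal (((x^2 + c^2) ^ r)⁻¹)
      = (ENNReal.ofReal c * ENNReal.ofReal c⁻¹)
          * ∫⁻ x : ℝ, ENNReal.ofReal (((x^2 + c^2) ^ r)⁻¹) := by rw [hcancel, one_mul]
    _ = ENNReal.ofReal c * (ENNReal.ofReal c⁻¹
          * ∫⁻ x : ℝ, ENNReal.ofReal (((x^2 + c^2) ^ r)⁻¹)) := by rw [mul_assoc]
    _ = ENNReal.ofReal c * (ENNReal.ofReal (c ^ (-(2*r)))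
          * ENNReal.ofReal (Real.sqrt Real.pi * Real.Gamma (r - 1/2) / Real.Gamma r)) := by
        rw [hmain]
    _ = ENNReal.ofReal (c ^ (1 - 2*r)
          * (Real.sqrt Real.pi * Real.Gamma (r - 1/2) / Real.Gamma r)) := by
        rw [← ENNReal.ofReal_mul (by positivity), ← ENNReal.ofReal_mul hc.le, ← mul_assoc]
        congr 2
        rw [show (1 - 2*r) = 1 + (-(2*r)) by ring, Real.rpow_add hc, Real.rpow_one]

end EisensteinFourierAux
open EisensteinFourierAux in
theorem eisenstein_zero_fourier_mode (r τ₂ : ℝ) (hr : 1 < r) (hτ : 0 < τ₂) :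
    ∫ τ₁ in (-(1:ℝ)/2)..(1/2), E2 r τ₁ τ₂
      = 2 * rzeta (2 * r) * τ₂ ^ r
        + 2 * Real.sqrt Real.pi * (Real.Gamma (r - 1/2) / Real.Gamma r)
            * rzeta (2 * r - 1) * τ₂ ^ (1 - r) := by
  classical
  have hr0 : (0:ℝ) < r := by linarith
  have hr2 : (1:ℝ)/2 < r := by linarith
  have hΓ : 0 < Real.Gamma r := Real.Gamma_pos_of_pos hr0
  have hΓ' : 0 < Real.Gamma (r - 1/2) := Real.Gamma_pos_of_pos (by linarith)
  set B0 : ℝ := Real.sqrt Real.pi * Real.Gamma (r - 1/2) / Real.Gamma r with hB0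
  have hB0nn : 0 ≤ B0 := by rw [hB0]; positivity
  set s : Set ℝ := Ioc (-(1:ℝ)/2) (1/2) with hs
  set T : ℤ × ℤ → ℝ → ℝ := fun p τ₁ => if p = 0 then 0 else
    τ₂ ^ r / ‖(p.1 : ℂ) * (τ₁ + τ₂ * Complex.I) + (p.2 : ℂ)‖ ^ (2 * r) with hT
  have hTnn : ∀ p τ₁, 0 ≤ T p τ₁ := by
    intro p τ₁
    simp only [hT]
    split
    · exact le_refl 0
    · have h1 : (0:ℝ) ≤ τ₂ ^ r := Real.rpow_nonneg hτ.le r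
      have h2 : (0:ℝ) ≤ ‖(p.1 : ℂ) * (τ₁ + τ₂ * Complex.I) + (p.2 : ℂ)‖ ^ (2 * r) :=
        Real.rpow_nonneg (norm_nonneg _) _
      exact div_nonneg h1 h2
  set F : ℤ × ℤ → ℝ → ℝ≥0∞ := fun p τ₁ => ENNReal.ofReal (T p τ₁) with hF
  have hE2 : ∀ τ₁, E2 r τ₁ τ₂ = (∑' p, F p τ₁).toReal := by
    intro τ₁
    rw [E2]
    exact tsum_toReal (fun p => hTnn p τ₁)
  have hFmeas : ∀ p, Measurable (F p) := by
    intro p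
    by_cases hp : p = 0
    · have : F p = fun _ => ENNReal.ofReal 0 := by
        funext τ₁; simp [hF, hT, hp]
      rw [this]
      exact measurable_const
    · simp only [hF, hT, if_neg hp]
      have hc : Continuous fun τ₁ : ℝ =>
          ‖(p.1 : ℂ) * ((τ₁ : ℂ) + (τ₂ : ℂ) * Complex.I) + (p.2 : ℂ)‖ :=
        continuous_norm.comp
          ((continuous_const.mul (Complex.continuous_ofReal.add continuous_const)).add
            continuous_const)
      exact (measurable_const.div (hc.measurable.pow_const (2*r))).ennreal_ofReal
  -- term formula for m ≠ 0
  have habs2 : ∀ (m n : ℤ) (τ₁ : ℝ), m ≠ 0 → T (m, n) τ₁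
      = τ₂ ^ r * ((((m:ℝ) * τ₁ + n)^2 + ((m:ℝ) * τ₂)^2) ^ r)⁻¹ := by
    intro m n τ₁ hm
    have hp : (m, n) ≠ (0 : ℤ × ℤ) := by
      intro h
      exact hm (by simpa using congrArg Prod.fst h)
    simp only [hT, if_neg hp]
    rw [div_eq_mul_inv]
    congr 2
    set z : ℂ := (m : ℂ) * ((τ₁ : ℂ) + (τ₂ : ℂ) * Complex.I) + (n : ℂ) with hz
    have h1 : ‖z‖ ^ (2*r) = ((‖z‖)^2 : ℝ) ^ r := by
      rw [← Real.rpow_natCast (‖z‖) 2, ← Real.rpow_mul (norm_nonneg z)]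
      norm_num
    rw [h1, Complex.sq_norm, Complex.normSq_apply]
    have hre : z.re = (m:ℝ) * τ₁ + n := by
      simp [hz, Complex.add_re, Complex.mul_re]
    have him : z.im = (m:ℝ) * τ₂ := by
      simp [hz, Complex.add_im, Complex.mul_im]
    rw [hre, him]
    ring
  have hvol : volume s = 1 := by
    rw [hs, Real.volume_Ioc]
    norm_num
  -- row m = 0
  have hz1 : 0 ≤ rzeta (2*r) := tsum_nonneg fun n => by positivity
  have hz2 : 0 ≤ rzeta (2*r - 1) := tsum_nonneg fun n => by positivity
  have hrow0 : ∑' n : ℤ, ∫⁻ τ₁ in s, F (0, n) τ₁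
      = 2 * ENNReal.ofReal (τ₂ ^ r * rzeta (2*r)) := by
    have hconst : ∀ n : ℤ, ∫⁻ τ₁ in s, F (0, n) τ₁
        = (fun n : ℤ => if n = 0 then 0
            else ENNReal.ofReal (τ₂ ^ r * ((|(n:ℝ)| ^ (2*r))⁻¹))) n := by
      intro n
      by_cases hn : n = 0
      · simp [hF, hT, hn]
      · have hp : ((0:ℤ), n) ≠ (0 : ℤ×ℤ) := by
          intro h
          exact hn (by simpa using congrArg Prod.snd h)
        have hTval : ∀ τ₁ : ℝ, T (0, n) τ₁ = τ₂ ^ r * ((|(n:ℝ)| ^ (2*r))⁻¹) := by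
          intro τ₁
          simp only [hT, if_neg hp]
          rw [div_eq_mul_inv]
          congr 3
          simp
        simp only [hF, hTval]
        rw [setLIntegral_const, hvol, mul_one, if_neg hn]
    rw [tsum_congr hconst,
      int_tsum_symm (by simp) (fun n => by simp [neg_eq_zero, abs_neg])]
    congr 1
    have hterm : ∀ k : ℕ, (if ((k:ℤ)+1 = 0) then 0
        else ENNReal.ofReal (τ₂ ^ r * ((|((((k:ℤ)+1 : ℤ)):ℝ)| ^ (2*r))⁻¹)))
        = ENNReal.ofReal (τ₂ ^ r * (1/((k:ℝ)+1) ^ (2*r))) := by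
      intro k
      rw [if_neg (by omega)]
      congr 2
      push_cast
      rw [abs_of_nonneg (by positivity)]
      rw [one_div]
    have hsum : Summable fun k : ℕ => τ₂ ^ r * (1/((k:ℝ)+1) ^ (2*r)) := by
      have h1 : Summable fun n : ℕ => 1/((n:ℝ)) ^ (2*r) :=
        Real.summable_one_div_nat_rpow.mpr (by linarith)
      have h2 := (summable_nat_add_iff 1).mpr h1
      exact ((h2.congr fun n => by push_cast; ring).mul_left _)
    calc ∑' k : ℕ, (if ((k:ℤ)+1 = 0) then 0
          else ENNReal.ofReal (τ₂ ^ r * ((|((((k:ℤ)+1 : ℤ)):ℝ)| ^ (2*r))⁻¹)))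
        = ∑' k : ℕ, ENNReal.ofReal (τ₂ ^ r * (1/((k:ℝ)+1) ^ (2*r))) := tsum_congr hterm
      _ = ENNReal.ofReal (∑' k : ℕ, τ₂ ^ r * (1/((k:ℝ)+1) ^ (2*r))) :=
          (ENNReal.ofReal_tsum_of_nonneg (fun k => by positivity) hsum).symm
      _ = ENNReal.ofReal (τ₂ ^ r * rzeta (2*r)) := by
          rw [tsum_mul_left, rzeta]
  -- rows m ≠ 0
  have hrowm : ∀ m : ℤ, m ≠ 0 → ∑' n : ℤ, ∫⁻ τ₁ in s, F (m, n) τ₁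
      = ENNReal.ofReal (|(m:ℝ)| ^ (1 - 2*r) * (τ₂ ^ (1-r) * B0)) := by
    intro m hm
    have hmR : ((m:ℝ)) ≠ 0 := Int.cast_ne_zero.mpr hm
    set c : ℝ := |(m:ℝ)| * τ₂ with hc_def
    have hc : 0 < c := mul_pos (abs_pos.mpr hmR) hτ
    set g : ℝ → ℝ≥0∞ := fun x => ENNReal.ofReal (τ₂ ^ r * ((x^2 + c^2) ^ r)⁻¹) with hg
    have hgmeas : Measurable g :=
      (measurable_const.mul
        ((((measurable_id'.pow_const 2).add_const (c^2)).pow_const r).inv)).ennreal_ofReal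
    have hcc : ((m:ℝ) * τ₂)^2 = c^2 := by
      rw [hc_def, mul_pow, mul_pow, sq_abs]
    have hFg : ∀ (n : ℤ) (τ₁ : ℝ), F (m, n) τ₁ = g ((m:ℝ) * τ₁ + n) := by
      intro n τ₁
      simp only [hF, hg]
      rw [habs2 m n τ₁ hm, hcc]
    calc ∑' n : ℤ, ∫⁻ τ₁ in s, F (m, n) τ₁
        = ∑' n : ℤ, ∫⁻ τ₁ in s, g ((m:ℝ) * τ₁ + n) :=
          tsum_congr fun n => lintegral_congr (hFg n)
      _ = ∫⁻ x, g x := periodize hgmeas hm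
      _ = ENNReal.ofReal (τ₂ ^ r) * ∫⁻ x, ENNReal.ofReal (((x^2 + c^2) ^ r)⁻¹) := by
          rw [← lintegral_const_mul _ (f := fun x : ℝ => ENNReal.ofReal (((x^2 + c^2) ^ r)⁻¹))
            ((((measurable_id'.pow_const 2).add_const (c^2)).pow_const r).inv.ennreal_ofReal)]
          refine lintegral_congr fun x => ?_
          rw [hg, ← ENNReal.ofReal_mul (Real.rpow_nonneg hτ.le r)]
      _ = ENNReal.ofReal (τ₂ ^ r) * ENNReal.ofReal (c ^ (1 - 2*r) * B0) := by
          rw [beta_scaled hr2 hc, hB0]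
      _ = ENNReal.ofReal (|(m:ℝ)| ^ (1 - 2*r) * (τ₂ ^ (1-r) * B0)) := by
          rw [← ENNReal.ofReal_mul (Real.rpow_nonneg hτ.le r)]
          congr 1
          rw [hc_def, Real.mul_rpow (abs_nonneg _) hτ.le]
          have hττ : τ₂ ^ (1-r) = τ₂ ^ r * τ₂ ^ (1-2*r) := by
            rw [← Real.rpow_add hτ]
            ring_nf
          rw [hττ]
          ring
  -- assemble
  have hG : Measurable fun τ₁ => ∑' p : ℤ×ℤ, F p τ₁ := Measurable.ennreal_tsum hFmeas
  have hKEY : ∫⁻ τ₁ in s, ∑' p : ℤ×ℤ, F p τ₁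
      = ENNReal.ofReal (2 * rzeta (2*r) * τ₂ ^ r
          + 2 * Real.sqrt Real.pi * (Real.Gamma (r - 1/2) / Real.Gamma r)
            * rzeta (2*r - 1) * τ₂ ^ (1-r)) := by
    rw [lintegral_tsum (fun p => (hFmeas p).aemeasurable)]
    rw [ENNReal.tsum_prod (f := fun m n => ∫⁻ τ₁ in s, F (m, n) τ₁)]
    have hsplit : ∀ f : ℤ → ℝ≥0∞, ∑' m, f m = f 0 + ∑' m, (if m = 0 then 0 else f m) := by
      intro f
      rw [ENNReal.tsum_eq_add_tsum_ite 0]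
      congr 1
      apply tsum_congr
      intro m
      by_cases hm : m = 0 <;> simp [hm]
    rw [hsplit fun m => ∑' n : ℤ, ∫⁻ τ₁ in s, F (m, n) τ₁]
    have h2 : ∑' m : ℤ, (if m = 0 then 0 else ∑' n : ℤ, ∫⁻ τ₁ in s, F (m, n) τ₁)
        = 2 * ENNReal.ofReal (rzeta (2*r - 1) * (τ₂ ^ (1-r) * B0)) := by
      have hcongr : ∀ m : ℤ, (if m = 0 then 0 else ∑' n : ℤ, ∫⁻ τ₁ in s, F (m, n) τ₁)
          = (fun m : ℤ => if m = 0 then 0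
              else ENNReal.ofReal (|(m:ℝ)| ^ (1-2*r) * (τ₂^(1-r) * B0))) m := by
        intro m
        by_cases hm : m = 0
        · simp [hm]
        · simp only [if_neg hm]
          exact hrowm m hm
      rw [tsum_congr hcongr,
        int_tsum_symm (by simp) (fun n => by simp [neg_eq_zero, abs_neg])]
      congr 1
      have hterm : ∀ k : ℕ, (if ((k:ℤ)+1 = 0) then 0
          else ENNReal.ofReal (|((((k:ℤ)+1 : ℤ)):ℝ)| ^ (1-2*r) * (τ₂^(1-r) * B0)))
          = ENNReal.ofReal ((1/((k:ℝ)+1) ^ (2*r-1)) * (τ₂^(1-r) * B0)) := by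
        intro k
        rw [if_neg (by omega)]
        congr 2
        push_cast
        rw [abs_of_nonneg (by positivity),
          show (1-2*r) = -(2*r-1) by ring, Real.rpow_neg (by positivity), one_div]
      have hsum : Summable fun k : ℕ => (1/((k:ℝ)+1) ^ (2*r-1)) * (τ₂^(1-r) * B0) := by
        have h1 : Summable fun n : ℕ => 1/((n:ℝ)) ^ (2*r-1) :=
          Real.summable_one_div_nat_rpow.mpr (by linarith)
        have h2 := (summable_nat_add_iff 1).mpr h1
        exact ((h2.congr fun n => by push_cast; ring).mul_right _)
      calc ∑' k : ℕ, (if ((k:ℤ)+1 = 0) then 0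
            else ENNReal.ofReal (|((((k:ℤ)+1 : ℤ)):ℝ)| ^ (1-2*r) * (τ₂^(1-r) * B0)))
          = ∑' k : ℕ, ENNReal.ofReal ((1/((k:ℝ)+1) ^ (2*r-1)) * (τ₂^(1-r) * B0)) :=
            tsum_congr hterm
        _ = ENNReal.ofReal (∑' k : ℕ, (1/((k:ℝ)+1) ^ (2*r-1)) * (τ₂^(1-r) * B0)) :=
            (ENNReal.ofReal_tsum_of_nonneg (fun k => by positivity) hsum).symm
        _ = ENNReal.ofReal (rzeta (2*r - 1) * (τ₂^(1-r) * B0)) := by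
            rw [tsum_mul_right, rzeta]
    rw [hrow0, h2]
    rw [show (2:ℝ≥0∞) = ENNReal.ofReal 2 from (ENNReal.ofReal_ofNat 2).symm,
      ← ENNReal.ofReal_mul (by norm_num), ← ENNReal.ofReal_mul (by norm_num),
      ← ENNReal.ofReal_add (by positivity) (by positivity)]
    congr 1
    rw [hB0]
    ring
  have hne : (∫⁻ τ₁ in s, ∑' p : ℤ×ℤ, F p τ₁) ≠ ⊤ := by
    rw [hKEY]; exact ENNReal.ofReal_ne_top
  have hfin : ∀ᵐ τ₁ ∂(volume.restrict s), (∑' p : ℤ×ℤ, F p τ₁) < ⊤ := ae_lt_top hG hne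
  have hrhsnn : 0 ≤ 2 * rzeta (2*r) * τ₂ ^ r
      + 2 * Real.sqrt Real.pi * (Real.Gamma (r - 1/2) / Real.Gamma r)
        * rzeta (2*r - 1) * τ₂ ^ (1-r) := by
    have h1 : (0:ℝ) ≤ τ₂ ^ r := Real.rpow_nonneg hτ.le r
    have h2 : (0:ℝ) ≤ τ₂ ^ (1-r) := Real.rpow_nonneg hτ.le _
    have h3 : (0:ℝ) ≤ Real.sqrt Real.pi := Real.sqrt_nonneg _
    positivity
  rw [intervalIntegral.integral_of_le (by norm_num : -(1:ℝ)/2 ≤ 1/2)]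
  have hfun : (fun τ₁ => E2 r τ₁ τ₂) = fun τ₁ => (∑' p : ℤ×ℤ, F p τ₁).toReal := funext hE2
  calc ∫ τ₁ in Ioc (-(1:ℝ)/2) (1/2), E2 r τ₁ τ₂
      = ∫ τ₁ in s, (∑' p : ℤ×ℤ, F p τ₁).toReal := by rw [← hs, hfun]
    _ = (∫⁻ τ₁ in s, ∑' p : ℤ×ℤ, F p τ₁).toReal := integral_toReal hG.aemeasurable hfin
    _ = _ := by rw [hKEY, ENNReal.toReal_ofReal hrhsnn]
end

section
/- Let Y be a Young diagram with column heights λ₁ ≥ λ₂ ≥ … and transpose column heights λ₁ᵀ ≥ λ₂ᵀ ≥ … (with λ_α = 0 and λ_αᵀ = 0 beyond the diagram). Then for every integer M at least as large as both the width and the height of Y, ∏_{α=1}^{M} (α + λ_α) = ∏_{α=1}^{M} (α + λ_αᵀ). -/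
open Finset

lemma young_key_count (Y : YoungDiagram) (M : ℕ)
    (hW : Y.rowLen 0 ≤ M) (hH : Y.colLen 0 ≤ M) (c : ℕ) :
    ((range M).filter (fun j => c ≤ j + 1 + Y.colLen j)).card
      = ((range M).filter (fun i => c ≤ i + 1 + Y.rowLen i)).card := by
  apply Finset.card_bij (fun j _ => if c ≤ j + 1 then j else c - 2 - j)
  · intro j hj
    simp only [mem_filter, mem_range] at hj ⊢
    split_ifs with h
    · exact ⟨hj.1, le_trans h (Nat.le_add_right _ _)⟩
    · push_neg at h
      have hcell : (c - 2 - j, j) ∈ Y := by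
        rw [YoungDiagram.mem_iff_lt_colLen]
        omega
      have hrow : j < Y.rowLen (c - 2 - j) := by
        rw [← YoungDiagram.mem_iff_lt_rowLen]
        exact hcell
      have hlt : c - 2 - j < Y.colLen j := by
        rw [← YoungDiagram.mem_iff_lt_colLen]
        exact hcell
      have : Y.colLen j ≤ Y.colLen 0 := Y.colLen_anti 0 j (Nat.zero_le _)
      constructor
      · omega
      · omega
  · intro a ha b hb hab
    simp only [mem_filter, mem_range] at ha hb
    split_ifs at hab with h1 h2 h2 <;> omega
  · intro i hi
    simp only [mem_filter, mem_range] at hi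
    by_cases h : c ≤ i + 1
    · refine ⟨i, ?_, ?_⟩
      · simp only [mem_filter, mem_range]
        exact ⟨hi.1, le_trans h (Nat.le_add_right _ _)⟩
      · simp [h]
    · push_neg at h
      have hcell : (i, c - 2 - i) ∈ Y := by
        rw [YoungDiagram.mem_iff_lt_rowLen]
        omega
      have hcol : i < Y.colLen (c - 2 - i) := by
        rw [← YoungDiagram.mem_iff_lt_colLen]
        exact hcell
      have hlt : c - 2 - i < Y.rowLen i := by
        rw [← YoungDiagram.mem_iff_lt_rowLen]
        exact hcell
      have : Y.rowLen i ≤ Y.rowLen 0 := Y.rowLen_anti 0 i (Nat.zero_le _)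
      refine ⟨c - 2 - i, ?_, ?_⟩
      · simp only [mem_filter, mem_range]
        constructor
        · omega
        · omega
      · have : ¬ c ≤ (c - 2 - i) + 1 := by omega
        simp only [this, if_false]
        omega

lemma count_eq_sub (M a : ℕ) (F : ℕ → ℕ) :
    ((range M).filter (fun j => a = F j)).card
      = ((range M).filter (fun j => a ≤ F j)).card
        - ((range M).filter (fun j => a + 1 ≤ F j)).card := by
  have hsub : (range M).filter (fun j => a + 1 ≤ F j)
      ⊆ (range M).filter (fun j => a ≤ F j) := by
    intro j hj
    simp only [mem_filter, mem_range] at hj ⊢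
    omega
  rw [← Finset.card_sdiff_of_subset hsub]
  congr 1
  ext j
  simp only [mem_sdiff, mem_filter, mem_range]
  omega

lemma young_prod_range (Y : YoungDiagram) (M : ℕ)
    (hW : Y.rowLen 0 ≤ M) (hH : Y.colLen 0 ≤ M) :
    ∏ j ∈ range M, (j + 1 + Y.colLen j) = ∏ j ∈ range M, (j + 1 + Y.rowLen j) := by
  rw [Finset.prod_eq_multiset_prod, Finset.prod_eq_multiset_prod]
  congr 1
  ext a
  rw [Multiset.count_map, Multiset.count_map]
  have h1 : ∀ (F : ℕ → ℕ),
      (Multiset.filter (fun j => a = F j) (range M).val).card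
        = ((range M).filter (fun j => a = F j)).card := fun F => rfl
  rw [h1, h1, count_eq_sub, count_eq_sub,
    young_key_count Y M hW hH a, young_key_count Y M hW hH (a + 1)]

/-- For a Young diagram `Y` with column heights `λ_α` (here `Y.colLen (α-1)`, 0-indexed in
Mathlib) and conjugate column heights `λ_αᵀ = Y.rowLen (α-1)`, and any `M` at least the
width (`Y.rowLen 0`) and height (`Y.colLen 0`) of `Y`, one has
`∏_{α=1}^M (α + λ_α) = ∏_{α=1}^M (α + λ_αᵀ)`. -/
theorem young_diagram_product_transpose (Y : YoungDiagram) (M : ℕ)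
    (hW : Y.rowLen 0 ≤ M) (hH : Y.colLen 0 ≤ M) :
    ∏ α ∈ Finset.Icc 1 M, (α + Y.colLen (α - 1))
      = ∏ α ∈ Finset.Icc 1 M, (α + Y.rowLen (α - 1)) := by
  have hIcc : Finset.Icc 1 M = Finset.Ico 1 (M + 1) := by
    rw [Finset.Ico_add_one_right_eq_Icc]
  rw [hIcc, Finset.prod_Ico_eq_prod_range, Finset.prod_Ico_eq_prod_range]
  simp only [Nat.add_sub_cancel, Nat.add_sub_cancel_left]
  have := young_prod_range Y M hW hH
  convert this using 2 <;> ring_nf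
end

section
/- Let Y_{p×q} be the rectangular Young diagram with p columns each of height q. With arm-length h(α,β) = p − α, leg-length v(α,β) = q − β, d = h − v, and n_a the number of boxes with d = a, one has n₀(Y_{p×q}) = min(p,q), n₁(Y_{p×q}) = min(p−1, q), n₋₁(Y_{p×q}) = min(p, q−1). Consequently μ(Y_{p×q}) = 2n₀ − n₁ − n₋₁ equals 2 if p = q and equals 1 if p ≠ q. -/
/-- For the rectangular `p × q` Young diagram (boxes `(α, β)` with `1 ≤ α ≤ p`,
`1 ≤ β ≤ q`), the number of boxes with `d = h - v = (p - α) - (q - β)` equal to `a`. -/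
def nRect (p q : ℕ) (a : ℤ) : ℕ :=
  ((Finset.Icc 1 p ×ˢ Finset.Icc 1 q).filter
    (fun c => ((p : ℤ) - c.1) - ((q : ℤ) - c.2) = a)).card

lemma nRect_eq (p q : ℕ) (a : ℤ) :
    nRect p q a = ((Finset.Icc 1 p).filter
      (fun α : ℕ => 1 ≤ (α : ℤ) + q - p + a ∧ (α : ℤ) + q - p + a ≤ q)).card := by
  unfold nRect
  apply Finset.card_bij (fun c _ => c.1)
  · intro c hc
    simp only [Finset.mem_filter, Finset.mem_product, Finset.mem_Icc] at hc ⊢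
    omega
  · intro c1 h1 c2 h2 h
    simp only [Finset.mem_filter, Finset.mem_product, Finset.mem_Icc] at h1 h2
    have : c1.2 = c2.2 := by omega
    exact Prod.ext h this
  · intro α hα
    simp only [Finset.mem_filter, Finset.mem_Icc] at hα
    refine ⟨(α, ((α : ℤ) + q - p + a).toNat), ?_, rfl⟩
    simp only [Finset.mem_filter, Finset.mem_product, Finset.mem_Icc]
    omega

theorem rect_young_diagram_mu (p q : ℕ) (hp : 0 < p) (hq : 0 < q) :
    nRect p q 0 = min p q ∧
    nRect p q 1 = min (p - 1) q ∧
    nRect p q (-1) = min p (q - 1) ∧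
    (2 * (nRect p q 0 : ℤ) - nRect p q 1 - nRect p q (-1)
      = if p = q then 2 else 1) := by
  have h0 : nRect p q 0 = min p q := by
    rw [nRect_eq]
    have : ((Finset.Icc 1 p).filter
        (fun α : ℕ => 1 ≤ (α : ℤ) + q - p + 0 ∧ (α : ℤ) + q - p + 0 ≤ q))
        = Finset.Icc (max 1 (p + 1 - q)) p := by
      ext α
      simp only [Finset.mem_filter, Finset.mem_Icc]
      omega
    rw [this, Nat.card_Icc]
    omega
  have h1 : nRect p q 1 = min (p - 1) q := by
    rw [nRect_eq]
    have : ((Finset.Icc 1 p).filter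
        (fun α : ℕ => 1 ≤ (α : ℤ) + q - p + 1 ∧ (α : ℤ) + q - p + 1 ≤ q))
        = Finset.Icc (max 1 (p - q)) (p - 1) := by
      ext α
      simp only [Finset.mem_filter, Finset.mem_Icc]
      omega
    rw [this, Nat.card_Icc]
    omega
  have hm1 : nRect p q (-1) = min p (q - 1) := by
    rw [nRect_eq]
    have : ((Finset.Icc 1 p).filter
        (fun α : ℕ => 1 ≤ (α : ℤ) + q - p + (-1) ∧ (α : ℤ) + q - p + (-1) ≤ q))
        = Finset.Icc (max 1 (p + 2 - q)) p := by
      ext α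
      simp only [Finset.mem_filter, Finset.mem_Icc]
      omega
    rw [this, Nat.card_Icc]
    omega
  refine ⟨h0, h1, hm1, ?_⟩
  rw [h0, h1, hm1]
  split_ifs with h
  · subst h; push_cast; omega
  · push_cast; omega
end
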